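/- arXiv:2511.04116 — 8 statements merged into one kernel-verified Lean document; each statement's English description precedes it below -/
import Mathlib

section
/- (Soundness of vD) For any set Γ of vD-formulas and any vD-formula α, if Γ ⊢ α in the Hilbert system for vD, then Γ ⊨ α in the topological semantics, i.e., either α is true in every topological model for vD, or there exists a finite nonempty Γ₀ ⊆ Γ such that ⋂_{γ∈Γ₀} v(γ) ⊆ v(α) holds in every topological model ⟨⟨X,τ⟩,v⟩ for vD. -/
/-- Formulas of the logic vD. -/
inductive VForm : Type
  | var : ℕ → VForm
  | conj : VForm → VForm → VForm
  | disj : VForm → VForm → VForm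
  | imp : VForm → VForm → VForm
  | neg : VForm → VForm
  | circ : VForm → VForm

/-- The bottom formula ⊥ := β₀ ∧ (¬β₀ ∧ ∘β₀), for the fixed formula `b = β₀`. -/
def vBot (b : VForm) : VForm := .conj b (.conj (.neg b) (.circ b))

/-- The defined classical negation ~α := α → ⊥. -/
def vNot (b : VForm) (a : VForm) : VForm := .imp a (vBot b)

/-- Axiom schemas (1)–(18) of the Hilbert system for vD. -/
inductive VAx (b : VForm) : VForm → Prop
  | a1 (α β : VForm) : VAx b (.imp α (.imp β α))
  | a2 (α β γ : VForm) :
      VAx b (.imp (.imp α (.imp β γ)) (.imp (.imp α β) (.imp α γ)))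
  | a3 (α β : VForm) : VAx b (.imp α (.imp β (.conj α β)))
  | a4 (α β : VForm) : VAx b (.imp (.conj α β) α)
  | a5 (α β : VForm) : VAx b (.imp (.conj α β) β)
  | a6 (α β : VForm) : VAx b (.imp α (.disj α β))
  | a7 (α β : VForm) : VAx b (.imp β (.disj α β))
  | a8 (α β : VForm) : VAx b (.disj (.imp α β) α)
  | a9 (α : VForm) : VAx b (.disj α (.neg α))
  | a10 (α γ : VForm) :
      VAx b (.imp (.imp α γ) (.imp (.imp (.neg α) γ) (.imp (.disj α (.neg α)) γ)))
  | a11 (α β γ : VForm) :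
      VAx b (.imp (.imp (.imp α β) γ)
        (.imp (.imp α γ) (.imp (.disj (.imp α β) α) γ)))
  | a12 (α β : VForm) : VAx b (.imp (.circ α) (.imp α (.imp (.neg α) β)))
  | a13 (α : VForm) : VAx b (.disj (.circ α) (.conj α (.neg α)))
  | a14 (α γ : VForm) :
      VAx b (.imp (.imp (.circ α) γ)
        (.imp (.imp (.conj α (.neg α)) γ)
          (.imp (.disj (.circ α) (.conj α (.neg α))) γ)))
  | a15 (α : VForm) :
      VAx b (.imp (vNot b (.neg α)) (vNot b (.neg (vNot b (.neg α)))))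
  | a16 (α : VForm) :
      VAx b (.imp (vNot b (.neg (vNot b (.neg α)))) (vNot b (.neg α)))
  | a17 (α β : VForm) :
      VAx b (.imp (vNot b (.neg (.conj α β))) (.conj (vNot b (.neg α)) (vNot b (.neg β))))
  | a18 (α β : VForm) :
      VAx b (.imp (.conj (vNot b (.neg α)) (vNot b (.neg β))) (vNot b (.neg (.conj α β))))

/-- Derivability in the Hilbert system for vD: axiom instances, hypotheses, modus
ponens, and the restricted rule (applied only to theorems, i.e. formulas derivable
from the empty set). -/
inductive VDer (b : VForm) : Set VForm → VForm → Prop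
  | ax {Γ : Set VForm} {φ : VForm} : VAx b φ → VDer b Γ φ
  | hyp {Γ : Set VForm} {φ : VForm} : φ ∈ Γ → VDer b Γ φ
  | mp {Γ : Set VForm} {φ ψ : VForm} :
      VDer b Γ φ → VDer b Γ (.imp φ ψ) → VDer b Γ ψ
  | negThm {Γ : Set VForm} {φ : VForm} :
      VDer b ∅ φ → VDer b Γ (.imp (.neg φ) (vNot b φ))

/-- A valuation on a topological space, making it a topological model for vD. -/
def IsValuation (b : VForm) {X : Type} [TopologicalSpace X] (v : VForm → Set X) : Prop :=
  (∀ α β : VForm, v (.imp α β) = (v α)ᶜ ∪ v β) ∧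
  (∀ α : VForm, v (.neg α) = closure ((v α)ᶜ)) ∧
  (∀ α : VForm, v (vNot b α) = (v α)ᶜ) ∧
  (∀ α β : VForm, v (.conj α β) = v α ∩ v β) ∧
  (∀ α β : VForm, v α ∪ v β ⊆ v (.disj α β)) ∧
  (∀ α : VForm, v (.circ α) = (v α)ᶜ ∪ interior (v α))

/-- A formula is valid if it is true (i.e. its value is the whole space) in every
topological model for vD. -/
def VValid (b : VForm) (φ : VForm) : Prop :=
  ∀ (X : Type) [TopologicalSpace X] (v : VForm → Set X),
    IsValuation b v → v φ = Set.univ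

/-- Semantic consequence in the topological semantics for vD. -/
def VSem (b : VForm) (Γ : Set VForm) (φ : VForm) : Prop :=
  VValid b φ ∨
    ∃ Γ₀ : Set VForm, Γ₀.Finite ∧ Γ₀.Nonempty ∧ Γ₀ ⊆ Γ ∧
      ∀ (X : Type) [TopologicalSpace X] (v : VForm → Set X),
        IsValuation b v → (⋂ γ ∈ Γ₀, v γ) ⊆ v φ

/-- Every axiom of vD is valid. -/
lemma vAx_valid (b : VForm) {φ : VForm} (hax : VAx b φ) : VValid b φ := by
  intro X _ v hv
  obtain ⟨hi, hn, hnn, hc, hd, ho⟩ := hv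
  have hn' : ∀ α : VForm, v (.neg α) = (interior (v α))ᶜ := by
    intro α; rw [hn, closure_compl]
  have hnot : ∀ α : VForm, v (vNot b (.neg α)) = interior (v α) := by
    intro α; rw [hnn, hn', compl_compl]
  cases hax with
  | a1 α β =>
      apply Set.eq_univ_iff_forall.mpr; intro x
      simp only [hi, Set.mem_union, Set.mem_compl_iff]; tauto
  | a2 α β γ =>
      apply Set.eq_univ_iff_forall.mpr; intro x
      simp only [hi, Set.mem_union, Set.mem_compl_iff]; tauto
  | a3 α β =>
      apply Set.eq_univ_iff_forall.mpr; intro x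
      simp only [hi, hc, Set.mem_union, Set.mem_compl_iff, Set.mem_inter_iff]; tauto
  | a4 α β =>
      apply Set.eq_univ_iff_forall.mpr; intro x
      simp only [hi, hc, Set.mem_union, Set.mem_compl_iff, Set.mem_inter_iff]; tauto
  | a5 α β =>
      apply Set.eq_univ_iff_forall.mpr; intro x
      simp only [hi, hc, Set.mem_union, Set.mem_compl_iff, Set.mem_inter_iff]; tauto
  | a6 α β =>
      apply Set.eq_univ_iff_forall.mpr; intro x
      rw [hi]
      by_cases hx : x ∈ v α
      · exact Or.inr (hd α β (Or.inl hx))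
      · exact Or.inl hx
  | a7 α β =>
      apply Set.eq_univ_iff_forall.mpr; intro x
      rw [hi]
      by_cases hx : x ∈ v β
      · exact Or.inr (hd α β (Or.inr hx))
      · exact Or.inl hx
  | a8 α β =>
      apply Set.eq_univ_iff_forall.mpr; intro x
      by_cases hx : x ∈ v α
      · exact hd _ _ (Or.inr hx)
      · refine hd _ _ (Or.inl ?_)
        rw [hi]; exact Or.inl hx
  | a9 α =>
      apply Set.eq_univ_iff_forall.mpr; intro x
      by_cases hx : x ∈ v α
      · exact hd _ _ (Or.inl hx)
      · refine hd _ _ (Or.inr ?_)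
        rw [hn]; exact subset_closure hx
  | a10 α γ =>
      apply Set.eq_univ_iff_forall.mpr; intro x
      have hcase : x ∈ v α ∨ x ∈ v (VForm.neg α) := by
        by_cases hx : x ∈ v α
        · exact Or.inl hx
        · exact Or.inr (by rw [hn]; exact subset_closure hx)
      simp only [hi, Set.mem_union, Set.mem_compl_iff]; tauto
  | a11 α β γ =>
      apply Set.eq_univ_iff_forall.mpr; intro x
      have hcase : x ∈ v (VForm.imp α β) ∨ x ∈ v α := by
        by_cases hx : x ∈ v α
        · exact Or.inr hx
        · exact Or.inl (by rw [hi]; exact Or.inl hx)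
      simp only [hi, Set.mem_union, Set.mem_compl_iff]; tauto
  | a12 α β =>
      apply Set.eq_univ_iff_forall.mpr; intro x
      have hsub : x ∈ interior (v α) → x ∈ v α := fun h => interior_subset h
      simp only [hi, hn', ho, Set.mem_union, Set.mem_compl_iff, not_not]; tauto
  | a13 α =>
      apply Set.eq_univ_iff_forall.mpr; intro x
      by_cases hx : x ∈ v α
      · by_cases hix : x ∈ interior (v α)
        · exact hd _ _ (Or.inl (by rw [ho]; exact Or.inr hix))
        · exact hd _ _ (Or.inr (by rw [hc, hn']; exact ⟨hx, hix⟩))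
      · exact hd _ _ (Or.inl (by rw [ho]; exact Or.inl hx))
  | a14 α γ =>
      apply Set.eq_univ_iff_forall.mpr; intro x
      have hcase : x ∈ v (VForm.circ α) ∨ x ∈ v (VForm.conj α (VForm.neg α)) := by
        rw [ho, hc, hn']
        by_cases hx : x ∈ v α
        · by_cases hix : x ∈ interior (v α)
          · exact Or.inl (Or.inr hix)
          · exact Or.inr ⟨hx, hix⟩
        · exact Or.inl (Or.inl hx)
      simp only [hi, Set.mem_union, Set.mem_compl_iff]; tauto
  | a15 α =>
      have e2 : v (vNot b (.neg (vNot b (.neg α)))) = interior (v α) := by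
        rw [hnot, hnot, interior_interior]
      rw [hi, hnot, e2, Set.compl_union_self]
  | a16 α =>
      have e2 : v (vNot b (.neg (vNot b (.neg α)))) = interior (v α) := by
        rw [hnot, hnot, interior_interior]
      rw [hi, e2, hnot, Set.compl_union_self]
  | a17 α β =>
      have e1 : v (vNot b (.neg (.conj α β))) = interior (v α) ∩ interior (v β) := by
        rw [hnot, hc, interior_inter]
      rw [hi, e1, hc, hnot, hnot, Set.compl_union_self]
  | a18 α β =>
      have e1 : v (vNot b (.neg (.conj α β))) = interior (v α) ∩ interior (v β) := by
        rw [hnot, hc, interior_inter]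
      rw [hi, e1, hc, hnot, hnot, Set.compl_union_self]

/-- Key induction: derivability gives a finite (possibly empty) subset of hypotheses
whose intersection is contained in the value of the conclusion, in every model. -/
lemma vDer_sem (b : VForm) (Γ : Set VForm) (α : VForm) (h : VDer b Γ α) :
    ∃ Γ₀ : Set VForm, Γ₀.Finite ∧ Γ₀ ⊆ Γ ∧
      ∀ (X : Type) [TopologicalSpace X] (v : VForm → Set X),
        IsValuation b v → (⋂ γ ∈ Γ₀, v γ) ⊆ v α := by
  induction h with
  | @ax Γ φ hφ =>
      refine ⟨∅, Set.finite_empty, Set.empty_subset _, ?_⟩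
      intro X _ v hv
      rw [vAx_valid b hφ X v hv]
      simp
  | @hyp Γ φ hφ =>
      refine ⟨{φ}, Set.finite_singleton _, Set.singleton_subset_iff.mpr hφ, ?_⟩
      intro X _ v hv
      simp
  | @mp Γ φ ψ h1 h2 ih1 ih2 =>
      obtain ⟨Γ₁, hf1, hs1, hm1⟩ := ih1
      obtain ⟨Γ₂, hf2, hs2, hm2⟩ := ih2
      refine ⟨Γ₁ ∪ Γ₂, hf1.union hf2, Set.union_subset hs1 hs2, ?_⟩
      intro X _ v hv x hx
      simp only [Set.mem_iInter] at hx
      have hx1 : x ∈ v φ := hm1 X v hv (Set.mem_iInter₂.mpr fun γ hγ => hx γ (Or.inl hγ))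
      have hx2 : x ∈ v (VForm.imp φ ψ) :=
        hm2 X v hv (Set.mem_iInter₂.mpr fun γ hγ => hx γ (Or.inr hγ))
      rw [hv.1] at hx2
      rcases hx2 with h | h
      · exact absurd hx1 h
      · exact h
  | @negThm Γ φ h ih =>
      obtain ⟨Γ₀, _, hs, hm⟩ := ih
      have hΓ₀ : Γ₀ = ∅ := Set.subset_empty_iff.mp hs
      subst hΓ₀
      refine ⟨∅, Set.finite_empty, Set.empty_subset _, ?_⟩
      intro X _ v hv
      have hφ : v φ = Set.univ := by
        apply Set.eq_univ_of_univ_subset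
        have := hm X v hv
        simpa using this
      have hnφ : v (VForm.neg φ) = ∅ := by
        rw [hv.2.1, hφ, Set.compl_univ, closure_empty]
      rw [hv.1, hnφ, Set.compl_empty]
      simp

/-- Soundness of vD with respect to the topological semantics. -/
theorem vD_soundness (b : VForm) (Γ : Set VForm) (α : VForm)
    (h : VDer b Γ α) : VSem b Γ α := by
  obtain ⟨Γ₀, hfin, hsub, hmod⟩ := vDer_sem b Γ α h
  rcases Set.eq_empty_or_nonempty Γ₀ with rfl | hne
  · left
    intro X _ v hv
    apply Set.eq_univ_of_univ_subset
    have := hmod X v hv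
    simpa using this
  · right
    exact ⟨Γ₀, hfin, hne, hsub, hmod⟩
end

section
/- (Deduction theorem for vD) For any set Γ of vD-formulas and any vD-formulas α, β: Γ ∪ {α} ⊢ β if and only if Γ ⊢ α → β. -/
lemma VDer.mono {b : VForm} {Γ Δ : Set VForm} {φ : VForm} (h : VDer b Γ φ)
    (hs : Γ ⊆ Δ) : VDer b Δ φ := by
  induction h generalizing Δ with
  | ax h => exact .ax h
  | hyp h => exact .hyp (hs h)
  | mp _ _ ih1 ih2 => exact .mp (ih1 hs) (ih2 hs)
  | negThm h => exact .negThm h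

lemma VDer.imp_self (b : VForm) (Γ : Set VForm) (α : VForm) :
    VDer b Γ (.imp α α) := by
  have k : VDer b Γ (.imp α (.imp (.imp α α) α)) := .ax (.a1 α (.imp α α))
  have s : VDer b Γ (.imp (.imp α (.imp (.imp α α) α))
      (.imp (.imp α (.imp α α)) (.imp α α))) := .ax (.a2 α (.imp α α) α)
  exact .mp (.ax (.a1 α α)) (.mp k s)

/-- Deduction theorem for vD. -/
theorem vD_deduction (b : VForm) (Γ : Set VForm) (α β : VForm) :
    VDer b (Γ ∪ {α}) β ↔ VDer b Γ (.imp α β) := by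
  constructor
  · intro h
    generalize hΔ : Γ ∪ {α} = Δ at h
    induction h with
    | @ax Δ φ h =>
      exact .mp (.ax h) (.ax (.a1 φ α))
    | @hyp Δ φ h =>
      subst hΔ
      rcases h with h | h
      · exact .mp (.hyp h) (.ax (.a1 φ α))
      · rcases h with rfl
        exact VDer.imp_self b Γ φ
    | @mp Δ φ ψ h1 h2 ih1 ih2 =>
      exact .mp (ih1 hΔ) (.mp (ih2 hΔ) (.ax (.a2 α φ ψ)))
    | @negThm Δ φ h =>
      exact .mp (.negThm h) (.ax (.a1 _ α))
  · intro h
    exact .mp (.hyp (Or.inr rfl)) (h.mono Set.subset_union_left)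
end

section
/- (Paraconsistency of vD) Let p and q be two distinct propositional variables. Then {p, ¬p} ⊬ q in the Hilbert system for vD. -/
set_option maxHeartbeats 1000000

/-- Classical valuation with all variables false. -/
def ev0 : VForm → Prop
  | .var _ => False
  | .conj a c => ev0 a ∧ ev0 c
  | .disj a c => ev0 a ∨ ev0 c
  | .imp a c => ev0 a → ev0 c
  | .neg a => ¬ ev0 a
  | .circ _ => True

/-- Paraconsistent valuation: first component is the truth value, second is an
"inconsistency" marker. The variable `p` is both true and inconsistent. -/
def ev1 (p : ℕ) : VForm → Prop × Prop
  | .var n => (n = p, n = p)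
  | .conj a c =>
      ((ev1 p a).1 ∧ (ev1 p c).1,
       (ev1 p a).1 ∧ (ev1 p c).1 ∧ ((ev1 p a).2 ∨ (ev1 p c).2))
  | .disj a c => ((ev1 p a).1 ∨ (ev1 p c).1, False)
  | .imp a c => ((ev1 p a).1 → (ev1 p c).1, False)
  | .neg a => (¬ (ev1 p a).1 ∨ (ev1 p a).2, False)
  | .circ a => (¬ ((ev1 p a).1 ∧ (ev1 p a).2), False)

lemma ax_sound0 {b φ : VForm} (h : VAx b φ) : ev0 φ := by
  cases h <;> simp only [ev0, vNot, vBot] <;> tauto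

lemma sound0 {b : VForm} {Γ : Set VForm} {φ : VForm} (h : VDer b Γ φ)
    (hΓ : ∀ ψ ∈ Γ, ev0 ψ) : ev0 φ := by
  induction h with
  | ax ha => exact ax_sound0 ha
  | hyp hm => exact hΓ _ hm
  | mp _ _ ih1 ih2 => exact (ih2 hΓ) (ih1 hΓ)
  | negThm _ _ => simp only [ev0, vNot, vBot]; tauto

lemma incon_ev0 (p : ℕ) (φ : VForm) (h : (ev1 p φ).2) : ¬ ev0 φ := by
  induction φ <;> simp only [ev1, ev0] at * <;> tauto

lemma ax_sound1 {b φ : VForm} (p : ℕ) (h : VAx b φ) : (ev1 p φ).1 := by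
  cases h <;> simp only [ev1, vNot, vBot] <;> tauto

lemma sound1 {b : VForm} {Γ : Set VForm} {φ : VForm} (p : ℕ) (h : VDer b Γ φ)
    (hΓ : ∀ ψ ∈ Γ, (ev1 p ψ).1) : (ev1 p φ).1 := by
  induction h with
  | ax ha => exact ax_sound1 p ha
  | hyp hm => exact hΓ _ hm
  | mp _ _ ih1 ih2 => exact (ih2 hΓ) (ih1 hΓ)
  | negThm hthm _ =>
      have h0 : ev0 _ := sound0 hthm (by simp)
      have h2 : ¬ (ev1 p _).2 := fun hc => incon_ev0 p _ hc h0
      simp only [ev1, vNot, vBot] at *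
      tauto

/-- Paraconsistency of vD: {p, ¬p} ⊬ q for distinct variables p, q. -/
theorem vD_paraconsistent (b : VForm) (p q : ℕ) (hpq : p ≠ q) :
    ¬ VDer b {VForm.var p, VForm.neg (VForm.var p)} (VForm.var q) := by
  intro h
  have := sound1 p h (by
    rintro ψ (rfl | rfl) <;> simp [ev1])
  simp only [ev1] at this
  exact hpq this.symm
end

section
/- Let p and q be two distinct propositional variables. Then {∘p, p} ⊬ q in the Hilbert system for vD. -/
/-- Boolean evaluation: ¬ classical, ∘ always true. -/
def vEv (v : ℕ → Bool) : VForm → Bool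
  | .var n => v n
  | .conj a c => vEv v a && vEv v c
  | .disj a c => vEv v a || vEv v c
  | .imp a c => !vEv v a || vEv v c
  | .neg a => !vEv v a
  | .circ _ => true

lemma vEv_ax (v : ℕ → Bool) {b φ : VForm} (h : VAx b φ) : vEv v φ = true := by
  cases h <;> first
    | (rename_i α β γ
       simp only [vEv, vNot, vBot]
       cases vEv v α <;> cases vEv v β <;> cases vEv v γ <;> cases vEv v b <;> simp)
    | (rename_i α β
       simp only [vEv, vNot, vBot]
       cases vEv v α <;> cases vEv v β <;> cases vEv v b <;> simp)
    | (rename_i α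
       simp only [vEv, vNot, vBot]
       cases vEv v α <;> cases vEv v b <;> simp)

lemma vEv_sound (v : ℕ → Bool) {b : VForm} {Γ : Set VForm} {φ : VForm}
    (h : VDer b Γ φ) (hΓ : ∀ ψ ∈ Γ, vEv v ψ = true) : vEv v φ = true := by
  induction h with
  | ax ha => exact vEv_ax v ha
  | hyp hm => exact hΓ _ hm
  | mp _ _ ih1 ih2 =>
      have := ih2 hΓ
      have h1 := ih1 hΓ
      simp [vEv, h1] at this
      exact this
  | negThm _ ih =>
      rename_i φ' hd
      simp only [vEv, vNot, vBot]
      cases vEv v φ' <;> cases vEv v b <;> simp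

/-- {∘p, p} ⊬ q for distinct variables p, q. -/
theorem vD_circ_p_p_not_explosive (b : VForm) (p q : ℕ) (hpq : p ≠ q) :
    ¬ VDer b {VForm.circ (VForm.var p), VForm.var p} (VForm.var q) := by
  intro h
  have := vEv_sound (fun n => decide (n = p)) h (by
    intro ψ hψ
    rcases hψ with h1 | h1 <;> subst h1 <;> simp [vEv])
  simp [vEv] at this
  exact hpq this.symm
end

section
/- Let p and q be two distinct propositional variables. Then {∘p, ¬p} ⊬ q in the Hilbert system for vD. -/
def vval : VForm → Bool
  | .var _ => false
  | .conj a c => vval a && vval c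
  | .disj a c => vval a || vval c
  | .imp a c => !vval a || vval c
  | .neg a => !vval a
  | .circ _ => true

lemma vval_ax {b φ : VForm} (h : VAx b φ) : vval φ = true := by
  cases h <;> rename_i v1 <;>
    first
    | (rename_i v2 v3
       simp only [vval, vNot, vBot]
       cases vval v1 <;> cases vval v2 <;> cases vval v3 <;>
         cases vval b <;> rfl)
    | (rename_i v2
       simp only [vval, vNot, vBot]
       cases vval v1 <;> cases vval v2 <;> cases vval b <;> rfl)
    | (simp only [vval, vNot, vBot]
       cases vval v1 <;> cases vval b <;> rfl)

lemma vval_sound {b : VForm} {Γ : Set VForm} {φ : VForm} (h : VDer b Γ φ)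
    (hΓ : ∀ ψ ∈ Γ, vval ψ = true) : vval φ = true := by
  induction h with
  | ax ha => exact vval_ax ha
  | hyp hm => exact hΓ _ hm
  | mp _ _ ih1 ih2 =>
      have := ih2 hΓ
      simp [vval, ih1 hΓ] at this
      exact this
  | negThm _ _ => simp [vval, vNot, vBot]

/-- {∘p, ¬p} ⊬ q for distinct variables p, q. -/
theorem vD_circ_p_neg_p_not_explosive (b : VForm) (p q : ℕ) (hpq : p ≠ q) :
    ¬ VDer b {VForm.circ (VForm.var p), VForm.neg (VForm.var p)} (VForm.var q) := by
  intro h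
  have := vval_sound h (by rintro ψ (rfl|rfl) <;> simp [vval])
  simp [vval] at this
end

section
/- (Explosiveness of the defined negation ~ in vD) For all vD-formulas α and β, the formula α → (~α → β) is a theorem of vD, i.e., ∅ ⊢ α → (~α → β). -/
lemma vd_id (b : VForm) (Γ : Set VForm) (φ : VForm) : VDer b Γ (.imp φ φ) :=
  .mp (.ax (VAx.a1 φ φ)) (.mp (.ax (VAx.a1 φ (.imp φ φ))) (.ax (VAx.a2 φ (.imp φ φ) φ)))

lemma vd_ded {b : VForm} {Γ : Set VForm} {φ ψ : VForm}
    (h : VDer b (insert φ Γ) ψ) : VDer b Γ (.imp φ ψ) := by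
  generalize hΓ : insert φ Γ = Γ' at h
  induction h with
  | ax hax => exact .mp (.ax hax) (.ax (VAx.a1 _ _))
  | hyp hm =>
    subst hΓ
    rcases hm with rfl | h
    · exact vd_id b Γ _
    · exact .mp (.hyp h) (.ax (VAx.a1 _ _))
  | mp _ _ ih1 ih2 =>
    exact .mp (ih1 hΓ) (.mp (ih2 hΓ) (.ax (VAx.a2 _ _ _)))
  | negThm h _ =>
    exact .mp (.negThm h) (.ax (VAx.a1 _ _))

/-- Explosiveness of the defined negation ~ in vD: ⊢ α → (~α → β). -/
theorem vD_tilde_explosive (b : VForm) (α β : VForm) :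
    VDer b ∅ (.imp α (.imp (vNot b α) β)) := by
  apply vd_ded
  apply vd_ded
  have ha : VDer b (insert (vNot b α) (insert α ∅)) α := .hyp (Set.mem_insert_of_mem _ (Set.mem_insert _ _))
  have hna : VDer b (insert (vNot b α) (insert α ∅)) (vNot b α) := .hyp (Set.mem_insert _ _)
  have hbot : VDer b (insert (vNot b α) (insert α ∅)) (vBot b) := .mp ha hna
  have hb : VDer b _ b := .mp hbot (.ax (VAx.a4 _ _))
  have hr : VDer b (insert (vNot b α) (insert α ∅)) (.conj (.neg b) (.circ b)) :=
    .mp hbot (.ax (VAx.a5 _ _))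
  have hnb : VDer b _ (VForm.neg b) := .mp hr (.ax (VAx.a4 _ _))
  have hcb : VDer b _ (VForm.circ b) := .mp hr (.ax (VAx.a5 _ _))
  exact .mp hnb (.mp hb (.mp hcb (.ax (VAx.a12 b β))))
end

section
/- (Validity of the vD axioms) Every instance of an axiom schema (1)–(18) of the Hilbert system for vD is valid in the topological semantics: if φ is such an axiom instance, then v(φ) = X for every topological model ⟨⟨X,τ⟩,v⟩ for vD. -/
/-- Every instance of an axiom schema of vD is valid in the topological semantics. -/
theorem vD_axioms_valid (b : VForm) (φ : VForm) (h : VAx b φ) : VValid b φ := by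
  intro X _ v hv
  obtain ⟨hImp, hNeg, hNot, hConj, hDisj, hCirc⟩ := hv
  have hN : ∀ α : VForm, v (vNot b (.neg α)) = interior (v α) := by
    intro α; rw [hNot, hNeg, closure_compl, compl_compl]
  apply Set.eq_univ_of_univ_subset
  intro x _
  cases h with
  | a1 α β =>
      simp only [hImp, Set.mem_union, Set.mem_compl_iff]; tauto
  | a2 α β γ =>
      simp only [hImp, Set.mem_union, Set.mem_compl_iff]; tauto
  | a3 α β =>
      simp only [hImp, hConj, Set.mem_union, Set.mem_compl_iff, Set.mem_inter_iff]; tauto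
  | a4 α β =>
      simp only [hImp, hConj, Set.mem_union, Set.mem_compl_iff, Set.mem_inter_iff]; tauto
  | a5 α β =>
      simp only [hImp, hConj, Set.mem_union, Set.mem_compl_iff, Set.mem_inter_iff]; tauto
  | a6 α β =>
      simp only [hImp, Set.mem_union, Set.mem_compl_iff]
      by_cases hx : x ∈ v α
      · exact Or.inr (hDisj α β (Or.inl hx))
      · exact Or.inl hx
  | a7 α β =>
      simp only [hImp, Set.mem_union, Set.mem_compl_iff]
      by_cases hx : x ∈ v β
      · exact Or.inr (hDisj α β (Or.inr hx))
      · exact Or.inl hx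
  | a8 α β =>
      apply hDisj
      by_cases hx : x ∈ v α
      · exact Or.inr hx
      · exact Or.inl (by rw [hImp]; exact Or.inl hx)
  | a9 α =>
      apply hDisj
      by_cases hx : x ∈ v α
      · exact Or.inl hx
      · exact Or.inr (by rw [hNeg]; exact subset_closure hx)
  | a10 α γ =>
      simp only [hImp]
      by_cases h1 : x ∈ v (.imp α γ)
      · by_cases h2 : x ∈ v (.imp (.neg α) γ)
        · refine (Set.mem_union _ _ _).mpr (Or.inr ((Set.mem_union _ _ _).mpr (Or.inr
            ((Set.mem_union _ _ _).mpr (Or.inr ?_)))))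
          rw [hImp] at h1 h2
          by_cases hx : x ∈ v α
          · exact ((Set.mem_union _ _ _).mp h1).resolve_left (not_not_intro hx)
          · refine ((Set.mem_union _ _ _).mp h2).resolve_left (not_not_intro ?_)
            rw [hNeg]; exact subset_closure hx
        · refine (Set.mem_union _ _ _).mpr (Or.inr ((Set.mem_union _ _ _).mpr (Or.inl ?_)))
          simp only [hImp] at h2; exact h2
      · refine (Set.mem_union _ _ _).mpr (Or.inl ?_)
        simp only [hImp] at h1; exact h1
  | a11 α β γ =>
      simp only [hImp]
      by_cases h1 : x ∈ v (.imp (.imp α β) γ)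
      · by_cases h2 : x ∈ v (.imp α γ)
        · refine (Set.mem_union _ _ _).mpr (Or.inr ((Set.mem_union _ _ _).mpr (Or.inr
            ((Set.mem_union _ _ _).mpr (Or.inr ?_)))))
          rw [hImp] at h1 h2
          by_cases hx : x ∈ v α
          · exact ((Set.mem_union _ _ _).mp h2).resolve_left (not_not_intro hx)
          · refine ((Set.mem_union _ _ _).mp h1).resolve_left (not_not_intro ?_)
            rw [hImp]; exact (Set.mem_union _ _ _).mpr (Or.inl hx)
        · refine (Set.mem_union _ _ _).mpr (Or.inr ((Set.mem_union _ _ _).mpr (Or.inl ?_)))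
          simp only [hImp] at h2; exact h2
      · refine (Set.mem_union _ _ _).mpr (Or.inl ?_)
        simp only [hImp] at h1; exact h1
  | a12 α β =>
      simp only [hImp]
      by_cases hx : x ∈ v α
      · by_cases hi : x ∈ interior (v α)
        · refine (Set.mem_union _ _ _).mpr (Or.inr ((Set.mem_union _ _ _).mpr (Or.inr
            ((Set.mem_union _ _ _).mpr (Or.inl ?_)))))
          rw [hNeg, closure_compl]
          simpa using hi
        · refine (Set.mem_union _ _ _).mpr (Or.inl ?_)
          rw [hCirc]
          simp [hx, hi]
      · exact (Set.mem_union _ _ _).mpr (Or.inr ((Set.mem_union _ _ _).mpr (Or.inl hx)))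
  | a13 α =>
      apply hDisj
      by_cases hx : x ∈ v α
      · by_cases hi : x ∈ interior (v α)
        · exact Or.inl (by rw [hCirc]; exact (Set.mem_union _ _ _).mpr (Or.inr hi))
        · refine Or.inr ?_
          rw [hConj, hNeg, closure_compl]
          exact ⟨hx, by simpa using hi⟩
      · exact Or.inl (by rw [hCirc]; exact (Set.mem_union _ _ _).mpr (Or.inl hx))
  | a14 α γ =>
      simp only [hImp]
      by_cases h1 : x ∈ v (.imp (.circ α) γ)
      · by_cases h2 : x ∈ v (.imp (.conj α (.neg α)) γ)
        · refine (Set.mem_union _ _ _).mpr (Or.inr ((Set.mem_union _ _ _).mpr (Or.inr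
            ((Set.mem_union _ _ _).mpr (Or.inr ?_)))))
          rw [hImp] at h1 h2
          by_cases hc : x ∈ v (.circ α)
          · exact ((Set.mem_union _ _ _).mp h1).resolve_left (not_not_intro hc)
          · refine ((Set.mem_union _ _ _).mp h2).resolve_left (not_not_intro ?_)
            rw [hCirc] at hc
            simp only [Set.mem_union, Set.mem_compl_iff, not_or, not_not] at hc
            rw [hConj, hNeg, closure_compl]
            exact ⟨hc.1, by simpa using hc.2⟩
        · refine (Set.mem_union _ _ _).mpr (Or.inr ((Set.mem_union _ _ _).mpr (Or.inl ?_)))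
          simp only [hImp] at h2; exact h2
      · refine (Set.mem_union _ _ _).mpr (Or.inl ?_)
        simp only [hImp] at h1; exact h1
  | a15 α =>
      have h2 : v (vNot b (.neg (vNot b (.neg α)))) = interior (v α) := by
        rw [hN, hN, interior_interior]
      rw [hImp, h2, hN]
      by_cases hi : x ∈ interior (v α)
      · exact (Set.mem_union _ _ _).mpr (Or.inr hi)
      · exact (Set.mem_union _ _ _).mpr (Or.inl hi)
  | a16 α =>
      have h2 : v (vNot b (.neg (vNot b (.neg α)))) = interior (v α) := by
        rw [hN, hN, interior_interior]
      rw [hImp, h2, hN]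
      by_cases hi : x ∈ interior (v α)
      · exact (Set.mem_union _ _ _).mpr (Or.inr hi)
      · exact (Set.mem_union _ _ _).mpr (Or.inl hi)
  | a17 α β =>
      rw [hImp, hConj, hN, hN, hN, hConj, interior_inter]
      by_cases hi : x ∈ interior (v α) ∩ interior (v β)
      · exact (Set.mem_union _ _ _).mpr (Or.inr hi)
      · exact (Set.mem_union _ _ _).mpr (Or.inl hi)
  | a18 α β =>
      rw [hImp, hConj, hN, hN, hN, hConj, interior_inter]
      by_cases hi : x ∈ interior (v α) ∩ interior (v β)
      · exact (Set.mem_union _ _ _).mpr (Or.inr hi)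
      · exact (Set.mem_union _ _ _).mpr (Or.inl hi)
end

section
/- (Extension of Kuratowski-like operators) Let X be a set and B ⊆ P(X) a collection of subsets with ∅, X ∈ B and F ∪ G ∈ B for all F, G ∈ B. Let ĥ : B → B be a Kuratowski-like operator on B, i.e., ĥ(∅) = ∅; F ⊆ ĥ(F) for all F ∈ B; ĥ(F ∪ G) = ĥ(F) ∪ ĥ(G) for all F, G ∈ B; and ĥ(ĥ(F)) = ĥ(F) for all F ∈ B. Define c : P(X) → P(X) by c(A) = ⋂{ĥ(F) : F ∈ B and A ⊆ ĥ(F)}. Then c is a Kuratowski closure operator over X (c(∅) = ∅; A ⊆ c(A) for all A ⊆ X; c(A ∪ B') = c(A) ∪ c(B') for all A, B' ⊆ X; c(c(A)) = c(A) for all A ⊆ X), and moreover c(F) = ĥ(F) for every F ∈ B. -/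
/-- Extension of a Kuratowski-like operator on a collection `B` of subsets of `X`
(containing ∅ and X and closed under binary unions) to a Kuratowski closure
operator on all of `P(X)`. -/
theorem kuratowski_like_extension {X : Type*} (B : Set (Set X)) (h : Set X → Set X)
    (hB_empty : ∅ ∈ B) (hB_univ : Set.univ ∈ B)
    (hB_union : ∀ F ∈ B, ∀ G ∈ B, F ∪ G ∈ B)
    (h_maps : ∀ F ∈ B, h F ∈ B)
    (h_empty : h ∅ = ∅)
    (h_ext : ∀ F ∈ B, F ⊆ h F)
    (h_union : ∀ F ∈ B, ∀ G ∈ B, h (F ∪ G) = h F ∪ h G)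
    (h_idem : ∀ F ∈ B, h (h F) = h F)
    (c : Set X → Set X)
    (hc : ∀ A : Set X, c A = ⋂₀ {S : Set X | ∃ F ∈ B, A ⊆ h F ∧ S = h F}) :
    (c ∅ = ∅) ∧ (∀ A : Set X, A ⊆ c A) ∧
    (∀ A A' : Set X, c (A ∪ A') = c A ∪ c A') ∧
    (∀ A : Set X, c (c A) = c A) ∧
    (∀ F ∈ B, c F = h F) := by
  -- monotonicity of h on B
  have h_mono : ∀ F ∈ B, ∀ G ∈ B, F ⊆ G → h F ⊆ h G := by
    intro F hF G hG hFG
    have : h (F ∪ G) = h F ∪ h G := h_union F hF G hG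
    rw [Set.union_eq_self_of_subset_left hFG] at this
    rw [this]
    exact Set.subset_union_left
  -- membership in family gives upper bound on c
  have c_le : ∀ A : Set X, ∀ F ∈ B, A ⊆ h F → c A ⊆ h F := by
    intro A F hF hAF
    rw [hc]
    exact Set.sInter_subset_of_mem ⟨F, hF, hAF, rfl⟩
  -- extensive
  have c_ext : ∀ A : Set X, A ⊆ c A := by
    intro A
    rw [hc]
    intro x hx S hS
    obtain ⟨F, _, hAF, rfl⟩ := hS
    exact hAF hx
  -- c F = h F for F ∈ B
  have c_eq : ∀ F ∈ B, c F = h F := by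
    intro F hF
    apply Set.Subset.antisymm
    · exact c_le F F hF (h_ext F hF)
    · rw [hc]
      intro x hx S hS
      obtain ⟨G, hG, hFG, rfl⟩ := hS
      -- h F ⊆ h (h G) = h G
      have : h F ⊆ h (h G) := h_mono F hF (h G) (h_maps G hG) hFG
      rw [h_idem G hG] at this
      exact this hx
  have c_empty : c ∅ = ∅ := by
    have := c_le ∅ ∅ hB_empty (by rw [h_empty])
    rw [h_empty] at this
    exact Set.subset_empty_iff.mp this
  -- c monotone
  have c_mono : ∀ A A' : Set X, A ⊆ A' → c A ⊆ c A' := by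
    intro A A' hAA'
    rw [hc A']
    intro x hx S hS
    obtain ⟨F, hF, hA'F, rfl⟩ := hS
    exact c_le A F hF (hAA'.trans hA'F) hx
  refine ⟨c_empty, c_ext, ?_, ?_, c_eq⟩
  · intro A A'
    apply Set.Subset.antisymm
    · intro x hx
      by_contra hcon
      rw [Set.mem_union, not_or] at hcon
      obtain ⟨h1, h2⟩ := hcon
      rw [hc A] at h1
      rw [hc A'] at h2
      simp only [Set.mem_sInter, not_forall] at h1 h2
      obtain ⟨S, ⟨F, hF, hAF, rfl⟩, hxF⟩ := h1
      obtain ⟨T, ⟨G, hG, hAG, rfl⟩, hxG⟩ := h2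
      have hmem : A ∪ A' ⊆ h (F ∪ G) := by
        rw [h_union F hF G hG]
        exact Set.union_subset_union hAF hAG
      have := c_le (A ∪ A') (F ∪ G) (hB_union F hF G hG) hmem hx
      rw [h_union F hF G hG] at this
      rcases this with hl | hr
      · exact hxF hl
      · exact hxG hr
    · exact Set.union_subset (c_mono A (A ∪ A') Set.subset_union_left)
        (c_mono A' (A ∪ A') Set.subset_union_right)
  · intro A
    apply Set.Subset.antisymm
    · intro x hx
      rw [hc A]
      intro S hS
      obtain ⟨F, hF, hAF, rfl⟩ := hS
      have h1 : c A ⊆ h (h F) := by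
        rw [h_idem F hF]; exact c_le A F hF hAF
      have h2 := c_le (c A) (h F) (h_maps F hF) h1 hx
      rwa [h_idem F hF] at h2
    · exact c_ext (c A)
end
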